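/- arXiv:1412.0953 — 3 statements merged into one kernel-verified Lean document; each statement's English description precedes it below -/
import Mathlib

section
/- Let A be a commutative ring and suppose there exist units λ₁,…,λₙ ∈ A^× and elements b₁,…,bₙ ∈ A such that Σᵢ bᵢ(λᵢ² − 1) = 1 in A. Then the subgroup E₂(A) of SL₂(A) generated by all elementary matrices E₁₂(x) and E₂₁(y) (x, y ∈ A) is a perfect group, i.e. E₂(A) equals its own commutator subgroup. In particular this holds if there exists a unit λ ∈ A^× with λ² − 1 ∈ A^×. -/
open Matrix

/-- The elementary matrix `E₁₂(x) = (1, x; 0, 1)` in `SL₂(A)`. -/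
def E12 {A : Type*} [CommRing A] (x : A) : Matrix.SpecialLinearGroup (Fin 2) A :=
  ⟨!![1, x; 0, 1], by simp [Matrix.det_fin_two_of]⟩

/-- The elementary matrix `E₂₁(y) = (1, 0; y, 1)` in `SL₂(A)`. -/
def E21 {A : Type*} [CommRing A] (y : A) : Matrix.SpecialLinearGroup (Fin 2) A :=
  ⟨!![1, 0; y, 1], by simp [Matrix.det_fin_two_of]⟩

/-- `E₂(A)`, the subgroup of `SL₂(A)` generated by the elementary matrices. -/
def E2 (A : Type*) [CommRing A] : Subgroup (Matrix.SpecialLinearGroup (Fin 2) A) :=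
  Subgroup.closure ({g | ∃ x : A, g = E12 x} ∪ {g | ∃ y : A, g = E21 y})

/-! Conjugating `E₁₂(x)` by `diag(λ, λ⁻¹) = w(λ) w(-1) ∈ E₂(A)` gives `E₁₂(λ² x)`, so the
commutator subgroup of `E₂(A)` contains `E₁₂((λ² - 1) x)` and, symmetrically, `E₂₁((λ² - 1) y)`
for every unit `λ`. The `a ∈ A` such that a subgroup contains `E₁₂(a y)` and `E₂₁(a y)` for all `y`
form an ideal; for the commutator subgroup it contains every `λᵢ² - 1`, hence `1`, so every
elementary matrix is a product of commutators. -/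

lemma Subgroup.commutator_eq_top_of_le_commutator {G : Type*} [Group G] {H : Subgroup G}
    (hH : H ≤ ⁅H, H⁆) : _root_.commutator H = ⊤ :=
  Subgroup.map_injective H.subtype_injective <| by
    rw [H.map_subtype_commutator, ← MonoidHom.range_eq_map, H.range_subtype]
    exact le_antisymm H.commutator_le_self hH

section

open scoped commutatorElement

variable {A : Type*} [CommRing A]

@[simp] lemma coe_E12 (x : A) : (E12 x : Matrix (Fin 2) (Fin 2) A) = !![1, x; 0, 1] := rfl

@[simp] lemma coe_E21 (y : A) : (E21 y : Matrix (Fin 2) (Fin 2) A) = !![1, 0; y, 1] := rfl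

lemma E12_add (x y : A) : E12 (x + y) = E12 x * E12 y := by
  ext1; simp [add_comm]

lemma E21_add (x y : A) : E21 (x + y) = E21 x * E21 y := by
  ext1; simp

lemma E12_zero : E12 (0 : A) = 1 := by
  ext1; simp [Matrix.one_fin_two]

lemma E21_zero : E21 (0 : A) = 1 := by
  ext1; simp [Matrix.one_fin_two]

lemma E12_mem_E2 (x : A) : E12 x ∈ E2 A :=
  Subgroup.subset_closure (Or.inl ⟨x, rfl⟩)

lemma E21_mem_E2 (y : A) : E21 y ∈ E2 A :=
  Subgroup.subset_closure (Or.inr ⟨y, rfl⟩)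

def diagUnit (u : Aˣ) : Matrix.SpecialLinearGroup (Fin 2) A :=
  ⟨!![(u : A), 0; 0, ((u⁻¹ : Aˣ) : A)], by simp [Matrix.det_fin_two_of]⟩

@[simp] lemma coe_diagUnit (u : Aˣ) :
    (diagUnit u : Matrix (Fin 2) (Fin 2) A) = !![(u : A), 0; 0, ((u⁻¹ : Aˣ) : A)] := rfl

/-- The Weyl element `w(u) = (0, u; -u⁻¹, 0)`. -/
def weylElem (u : Aˣ) : Matrix.SpecialLinearGroup (Fin 2) A :=
  E12 (u : A) * E21 (-((u⁻¹ : Aˣ) : A)) * E12 (u : A)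

lemma weylElem_mem_E2 (u : Aˣ) : weylElem u ∈ E2 A :=
  mul_mem (mul_mem (E12_mem_E2 _) (E21_mem_E2 _)) (E12_mem_E2 _)

lemma diagUnit_eq_weylElem_mul (u : Aˣ) : diagUnit u = weylElem u * weylElem (-1) := by
  ext1; simp [weylElem]

lemma diagUnit_mem_E2 (u : Aˣ) : diagUnit u ∈ E2 A := by
  rw [diagUnit_eq_weylElem_mul]
  exact mul_mem (weylElem_mem_E2 u) (weylElem_mem_E2 (-1))

lemma diagUnit_commutator_E12 (u : Aˣ) (x : A) :
    ⁅diagUnit u, E12 x⁆ = E12 (((u : A) ^ 2 - 1) * x) := by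
  ext1; simp [commutatorElement_def, Matrix.adjugate_fin_two_of]; ring_nf

lemma diagUnit_inv_commutator_E21 (u : Aˣ) (y : A) :
    ⁅diagUnit u⁻¹, E21 y⁆ = E21 (((u : A) ^ 2 - 1) * y) := by
  ext1; simp [commutatorElement_def, Matrix.adjugate_fin_two_of]; ring_nf

def elementaryIdeal (H : Subgroup (Matrix.SpecialLinearGroup (Fin 2) A)) : Ideal A where
  carrier := {a | ∀ y, E12 (a * y) ∈ H ∧ E21 (a * y) ∈ H}
  zero_mem' y := by simp [E12_zero, E21_zero, H.one_mem]
  add_mem' {a b} ha hb y := by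
    rw [add_mul, E12_add, E21_add]
    exact ⟨mul_mem (ha y).1 (hb y).1, mul_mem (ha y).2 (hb y).2⟩
  smul_mem' c a ha y := by
    simpa only [smul_eq_mul, mul_left_comm c, mul_assoc] using ha (c * y)

lemma E2_le_of_one_mem_elementaryIdeal {H : Subgroup (Matrix.SpecialLinearGroup (Fin 2) A)}
    (h : 1 ∈ elementaryIdeal H) : E2 A ≤ H := by
  refine (Subgroup.closure_le H).mpr ?_
  rintro g (⟨x, rfl⟩ | ⟨y, rfl⟩)
  · simpa using (h x).1
  · simpa using (h y).2

lemma sq_sub_one_mem_elementaryIdeal_commutator (u : Aˣ) :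
    (u : A) ^ 2 - 1 ∈ elementaryIdeal ⁅E2 A, E2 A⁆ := fun y => by
  rw [← diagUnit_commutator_E12, ← diagUnit_inv_commutator_E21]
  exact ⟨Subgroup.commutator_mem_commutator (diagUnit_mem_E2 u) (E12_mem_E2 y),
    Subgroup.commutator_mem_commutator (diagUnit_mem_E2 u⁻¹) (E21_mem_E2 y)⟩

end

/-- If there are units `λ₁, …, λₙ` and elements `b₁, …, bₙ` of a commutative ring `A` with
`Σᵢ bᵢ (λᵢ² - 1) = 1`, then `E₂(A)` is a perfect group. -/
theorem stmt0 (A : Type*) [CommRing A] (n : ℕ) (lam : Fin n → Aˣ) (b : Fin n → A)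
    (h : ∑ i, b i * ((lam i : A) ^ 2 - 1) = 1) :
    commutator ↥(E2 A) = ⊤ := by
  refine Subgroup.commutator_eq_top_of_le_commutator (E2_le_of_one_mem_elementaryIdeal ?_)
  rw [← h]
  exact Ideal.sum_mem _ fun i _ =>
    Ideal.mul_mem_left _ _ (sq_sub_one_mem_elementaryIdeal_commutator (lam i))
end

section
/- Let A be a Dedekind domain with fraction field K and let I be a nonzero fractional ideal of A whose class in the ideal class group of A is a square, i.e. I = u·J² for some u ∈ K^× and some nonzero fractional ideal J. Then the group H(I) is isomorphic to SL₂(A); indeed H(I) is conjugate to SL₂(A) inside GL₂(K). -/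
/-!
Write `I = v J²` with `v = (u)`. Since `J` is generated by two elements, `J⁻¹ J = 1` yields
`p₁ q₁ + p₂ q₂ = 1` with `pᵢ ∈ J⁻¹` and `qᵢ ∈ J`. The matrix `M = (p₁, p₂; -u q₂, u q₁)` has
determinant `u` and carries `A²` onto `J⁻¹ ⊕ u J = J⁻¹ (A ⊕ I)`, so conjugation by `M` carries
`SL₂(A)` onto the stabilizer `H(I)` of `A ⊕ I`. Both inclusions are checked entrywise: each entry
of a product of matrices lies in the corresponding entry of the product of their ideal patterns.
-/

open Matrix

/-- For a fractional ideal `I` of a Dedekind domain `A` with fraction field `K`, `HSet A K I`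
is the set of matrices `(a, b; c, d) ∈ SL₂(K)` with `a, d ∈ A`, `b ∈ I⁻¹` and `c ∈ I`
(the stabilizer `H(I)` of the lattice `A ⊕ I`). -/
def HSet (A K : Type*) [CommRing A] [IsDomain A] [IsDedekindDomain A] [Field K] [Algebra A K]
    [IsFractionRing A K] (I : FractionalIdeal (nonZeroDivisors A) K) :
    Set (Matrix (Fin 2) (Fin 2) K) :=
  {g | g.det = 1 ∧ g 0 0 ∈ (algebraMap A K).range ∧ g 1 1 ∈ (algebraMap A K).range ∧
    g 0 1 ∈ I⁻¹ ∧ g 1 0 ∈ I}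

/-- `SL₂(A)` viewed as a set of matrices over `K`. -/
def SLA (A K : Type*) [CommRing A] [Field K] [Algebra A K] : Set (Matrix (Fin 2) (Fin 2) K) :=
  {g | g.det = 1 ∧ ∀ i j, g i j ∈ (algebraMap A K).range}

open FractionalIdeal nonZeroDivisors

namespace FractionalIdeal

section Semiring

variable {R K : Type*} [CommRing R] [CommRing K] [Algebra R K] {S : Submonoid R}

theorem add_self (I : FractionalIdeal S K) : I + I = I := by
  rw [← sup_eq_add, sup_idem]

theorem sum_mem_sum {ι : Type*} (s : Finset ι) {x : ι → K} {I : ι → FractionalIdeal S K}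
    (h : ∀ i ∈ s, x i ∈ I i) : ∑ i ∈ s, x i ∈ ∑ i ∈ s, I i := by
  classical
  induction s using Finset.induction_on with
  | empty => simp
  | insert a s ha ih =>
    rw [Finset.sum_insert ha, Finset.sum_insert ha, mem_add]
    exact ⟨_, h a (s.mem_insert_self a), _, ih fun i hi => h i (Finset.mem_insert_of_mem hi), rfl⟩

end Semiring

variable {A K : Type*} [CommRing A] [IsDedekindDomain A] [Field K] [Algebra A K]
  [IsFractionRing A K]

theorem exists_eq_spanSingleton_add_spanSingleton {J : FractionalIdeal A⁰ K} (hJ : J ≠ 0) :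
    ∃ x y : K, J = spanSingleton A⁰ x + spanSingleton A⁰ y := by
  obtain ⟨x, hxJ, hx⟩ : ∃ x ∈ J, x ≠ 0 := by
    by_contra! h
    exact hJ (eq_zero_iff.mpr h)
  obtain ⟨y, hy⟩ := IsDedekindDomain.exists_add_spanSingleton_mul_eq
    (spanSingleton_le_iff_mem.mpr hxJ) (by simpa [spanSingleton_eq_zero_iff]) one_ne_zero
  exact ⟨x, y, by rw [← hy, mul_one]⟩

theorem exists_mul_add_mul_eq_one {J : FractionalIdeal A⁰ K} (hJ : J ≠ 0) :
    ∃ p₁ ∈ J⁻¹, ∃ p₂ ∈ J⁻¹, ∃ q₁ ∈ J, ∃ q₂ ∈ J, p₁ * q₁ + p₂ * q₂ = 1 := by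
  obtain ⟨q₁, q₂, hJq⟩ := exists_eq_spanSingleton_add_spanSingleton hJ
  have h1 : (1 : K) ∈ spanSingleton A⁰ q₁ * J⁻¹ + spanSingleton A⁰ q₂ * J⁻¹ := by
    rw [← add_mul, ← hJq, mul_inv_cancel₀ hJ]
    exact one_mem_one A⁰
  obtain ⟨_, hx₁, _, hx₂, h⟩ := (mem_add _ _ _).mp h1
  obtain ⟨p₁, hp₁, rfl⟩ := mem_singleton_mul.mp hx₁
  obtain ⟨p₂, hp₂, rfl⟩ := mem_singleton_mul.mp hx₂
  refine ⟨p₁, hp₁, p₂, hp₂, q₁, ?_, q₂, ?_, by rw [← h]; ring⟩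
  · exact hJq ▸ (mem_add _ _ _).mpr ⟨q₁, mem_spanSingleton_self _ _, 0, zero_mem _, add_zero _⟩
  · exact hJq ▸ (mem_add _ _ _).mpr ⟨0, zero_mem _, q₂, mem_spanSingleton_self _ _, zero_add _⟩

end FractionalIdeal

namespace Matrix

variable {R K : Type*} [CommRing R] [CommRing K] [Algebra R K] {S : Submonoid R} {l m n : Type*}

def entriesIn (E : Matrix m n (FractionalIdeal S K)) : Set (Matrix m n K) :=
  {X | ∀ i j, X i j ∈ E i j}

theorem mul_mem_entriesIn_mul [Fintype m] {X : Matrix l m K} {Y : Matrix m n K}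
    {E : Matrix l m (FractionalIdeal S K)} {F : Matrix m n (FractionalIdeal S K)}
    (hX : X ∈ entriesIn E) (hY : Y ∈ entriesIn F) : X * Y ∈ entriesIn (E * F) :=
  fun i j => sum_mem_sum _ fun k _ => mul_mem_mul (hX i k) (hY k j)

end Matrix

theorem mem_SLA_iff {A K : Type*} [CommRing A] [Field K] [Algebra A K]
    {g : Matrix (Fin 2) (Fin 2) K} :
    g ∈ SLA A K ↔
      g.det = 1 ∧ g ∈ entriesIn (!![1, 1; 1, 1] : Matrix _ _ (FractionalIdeal A⁰ K)) := by
  simp [SLA, entriesIn, Fin.forall_fin_two, mem_one_iff, RingHom.mem_range]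

section Conjugation

variable {A K : Type*} [CommRing A] [IsDomain A] [IsDedekindDomain A] [Field K] [Algebra A K]
  [IsFractionRing A K]

theorem mem_HSet_iff {I : FractionalIdeal A⁰ K} {g : Matrix (Fin 2) (Fin 2) K} :
    g ∈ HSet A K I ↔ g.det = 1 ∧ g ∈ entriesIn !![1, I⁻¹; I, 1] := by
  simp [HSet, entriesIn, Fin.forall_fin_two, mem_one_iff, RingHom.mem_range, and_assoc, and_comm,
    and_left_comm]

theorem idealPattern_conj_SLA {J v : FractionalIdeal A⁰ K} (hJ : J ≠ 0) (hv : v ≠ 0) :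
    !![J⁻¹, J⁻¹; v * J, v * J] * !![1, 1; 1, 1] * !![J, v⁻¹ * J⁻¹; J, v⁻¹ * J⁻¹] =
      !![1, (v * J ^ 2)⁻¹; v * J ^ 2, 1] := by
  ext i j : 1
  fin_cases i <;> fin_cases j <;> simp [mul_apply, Fin.sum_univ_two, add_self] <;> field_simp

theorem idealPattern_conj_HSet {J v : FractionalIdeal A⁰ K} (hJ : J ≠ 0) (hv : v ≠ 0) :
    !![J, v⁻¹ * J⁻¹; J, v⁻¹ * J⁻¹] * !![1, (v * J ^ 2)⁻¹; v * J ^ 2, 1] *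
      !![J⁻¹, J⁻¹; v * J, v * J] = !![1, 1; 1, 1] := by
  ext i j : 1
  fin_cases i <;> fin_cases j <;> simp [mul_apply, Fin.sum_univ_two] <;> field_simp <;>
    simp [add_self]

theorem HSet_eq_image_conj_SLA {J v : FractionalIdeal A⁰ K} (hJ : J ≠ 0) (hv : v ≠ 0)
    (C : GL (Fin 2) K)
    (hC₁ : (↑(C⁻¹) : Matrix (Fin 2) (Fin 2) K) ∈ entriesIn !![J⁻¹, J⁻¹; v * J, v * J])
    (hC₂ : (↑C : Matrix (Fin 2) (Fin 2) K) ∈ entriesIn !![J, v⁻¹ * J⁻¹; J, v⁻¹ * J⁻¹]) :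
    HSet A K (v * J ^ 2) = (fun g => (↑(C⁻¹) : Matrix (Fin 2) (Fin 2) K) * g *
      (↑C : Matrix (Fin 2) (Fin 2) K)) '' SLA A K := by
  ext h
  constructor
  · rw [mem_HSet_iff]
    rintro ⟨hdet, hh⟩
    refine ⟨(↑C : Matrix (Fin 2) (Fin 2) K) * h * (↑(C⁻¹) : Matrix (Fin 2) (Fin 2) K),
      mem_SLA_iff.mpr ⟨by rwa [det_units_conj], ?_⟩, ?_⟩
    · simpa only [idealPattern_conj_HSet hJ hv] using
        mul_mem_entriesIn_mul (mul_mem_entriesIn_mul hC₂ hh) hC₁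
    · simp only [Matrix.mul_assoc, Units.inv_mul_cancel_left, Units.inv_mul, Matrix.mul_one]
  · rintro ⟨g, hg, rfl⟩
    obtain ⟨hdet, hg⟩ := mem_SLA_iff.mp hg
    refine mem_HSet_iff.mpr ⟨by rwa [det_units_conj'], ?_⟩
    simpa only [idealPattern_conj_SLA hJ hv] using
      mul_mem_entriesIn_mul (mul_mem_entriesIn_mul hC₁ hg) hC₂

theorem exists_GL_mem_entriesIn {J : FractionalIdeal A⁰ K} (hJ : J ≠ 0) {u : K} (hu : u ≠ 0) :
    ∃ C : GL (Fin 2) K,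
      (↑(C⁻¹) : Matrix (Fin 2) (Fin 2) K) ∈
        entriesIn !![J⁻¹, J⁻¹; spanSingleton A⁰ u * J, spanSingleton A⁰ u * J] ∧
      (↑C : Matrix (Fin 2) (Fin 2) K) ∈ entriesIn
        !![J, (spanSingleton A⁰ u)⁻¹ * J⁻¹; J, (spanSingleton A⁰ u)⁻¹ * J⁻¹] := by
  obtain ⟨p₁, hp₁, p₂, hp₂, q₁, hq₁, q₂, hq₂, h⟩ := exists_mul_add_mul_eq_one hJ
  let M : Matrix (Fin 2) (Fin 2) K := !![p₁, p₂; -(u * q₂), u * q₁]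
  let N : Matrix (Fin 2) (Fin 2) K := !![q₁, -(u⁻¹ * p₂); q₂, u⁻¹ * p₁]
  have hNM : N * M = 1 := by
    ext i j
    fin_cases i <;> fin_cases j <;> simp [N, M, mul_apply, Fin.sum_univ_two] <;> field_simp
    · linear_combination h
    · ring
    · ring
    · linear_combination h
  refine ⟨⟨N, M, hNM, mul_eq_one_comm.mp hNM⟩, ?_, ?_⟩
  · intro i j
    fin_cases i <;> fin_cases j
    exacts [hp₁, hp₂, mem_singleton_mul.mpr ⟨-q₂, Submodule.neg_mem _ hq₂, (mul_neg u q₂).symm⟩,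
      mul_mem_mul (mem_spanSingleton_self _ u) hq₁]
  · intro i j
    rw [spanSingleton_inv]
    fin_cases i <;> fin_cases j
    exacts [hq₁, mem_singleton_mul.mpr ⟨-p₂, Submodule.neg_mem _ hp₂, (mul_neg u⁻¹ p₂).symm⟩,
      hq₂, mul_mem_mul (mem_spanSingleton_self _ u⁻¹) hp₁]

end Conjugation

theorem stmt3_general (A K : Type*) [CommRing A] [IsDomain A] [IsDedekindDomain A] [Field K] [Algebra A K]
    [IsFractionRing A K] (I : FractionalIdeal (nonZeroDivisors A) K)
    (hsq : ∃ (u : K) (J : FractionalIdeal (nonZeroDivisors A) K), u ≠ 0 ∧ J ≠ 0 ∧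
      I = FractionalIdeal.spanSingleton (nonZeroDivisors A) u * J ^ 2) :
    ∃ M : GL (Fin 2) K,
      HSet A K I = (fun g => (↑(M⁻¹) : Matrix (Fin 2) (Fin 2) K) * g * (↑M : Matrix (Fin 2) (Fin 2) K)) '' SLA A K := by
  obtain ⟨u, J, hu, hJ, rfl⟩ := hsq
  obtain ⟨C, hC₁, hC₂⟩ := exists_GL_mem_entriesIn hJ hu
  exact ⟨C, HSet_eq_image_conj_SLA hJ (spanSingleton_eq_zero_iff.not.mpr hu) C hC₁ hC₂⟩

/-- If the class of a nonzero fractional ideal `I` of a Dedekind domain `A` is a square in the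
class group, i.e. `I = u·J²` for some `u ∈ K^×` and some nonzero fractional ideal `J`, then
`H(I)` is conjugate to `SL₂(A)` inside `GL₂(K)` (in particular `H(I) ≅ SL₂(A)`). -/
theorem stmt3 (A K : Type*) [CommRing A] [IsDomain A] [IsDedekindDomain A] [Field K] [Algebra A K]
    [IsFractionRing A K] (I : FractionalIdeal (nonZeroDivisors A) K) (hI : I ≠ 0)
    (hsq : ∃ (u : K) (J : FractionalIdeal (nonZeroDivisors A) K), u ≠ 0 ∧ J ≠ 0 ∧
      I = FractionalIdeal.spanSingleton (nonZeroDivisors A) u * J ^ 2) :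
    ∃ M : GL (Fin 2) K,
      HSet A K I = (fun g => (↑(M⁻¹) : Matrix (Fin 2) (Fin 2) K) * g * (↑M : Matrix (Fin 2) (Fin 2) K)) '' SLA A K :=
  stmt3_general A K I hsq
end

section
/- Let A be a Dedekind domain and let I and J be nonzero comaximal ideals of A, i.e. I + J = A. Then the composite homomorphism Γ(I) → SL₂(A) → SL₂(A/J), restricting the reduction map modulo J to the principal congruence subgroup of level I, is surjective. -/
/-!
By the Chinese remainder theorem, `(1, T) ∈ SL₂(A/I) × SL₂(A/J)` comes from some
`S ∈ SL₂(A/(I ⊓ J))`, so it suffices that reduction `SL₂(A) → SL₂(A/K)` is onto for every nonzero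
ideal `K`. The bottom row of `S` is a coprime pair modulo `K`; it lifts to a coprime pair `(c, d)`
of `A` by taking `c ≠ 0` and choosing `d` by CRT to be a unit modulo the finitely many primes that
contain `c` but not `K`. Once `x c + y d = 1`, adding multiples of `(y, -x)` to a lift of the top
row makes the determinant exactly `1`.
-/

open Matrix

/-- The principal congruence subgroup `Γ(I)` of `SL₂(A)`: the kernel of reduction mod `I`. -/
def Gamma (A : Type*) [CommRing A] (I : Ideal A) :
    Subgroup (Matrix.SpecialLinearGroup (Fin 2) A) :=
  (Matrix.SpecialLinearGroup.map (Ideal.Quotient.mk I)).ker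

namespace Matrix.SpecialLinearGroup

variable {R S : Type*} [CommRing R] [CommRing S] {n : Type*} [DecidableEq n] [Fintype n]

theorem map_surjective_of_isCoprime_lift {f : R →+* S} (hf : Function.Surjective f)
    (hlift : ∀ x y : S, IsCoprime x y → ∃ c d : R, IsCoprime c d ∧ f c = x ∧ f d = y) :
    Function.Surjective (map (n := Fin 2) f) := by
  intro g
  obtain ⟨c, d, ⟨x, y, hxy⟩, hc, hd⟩ := hlift _ _ (g.isCoprime_row 1)
  obtain ⟨a, ha⟩ := hf (g 0 0)
  obtain ⟨b, hb⟩ := hf (g 0 1)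
  -- `k` is the defect of the determinant; it dies under `f`, and `x c + y d = 1` absorbs it
  set k := a * d - b * c - 1
  have hk : f k = 0 := by
    have hdet := g.det_coe
    rw [det_fin_two] at hdet
    simp only [k, map_sub, map_mul, map_one, ha, hb, hc, hd, hdet, sub_self]
  obtain ⟨N, hN⟩ : ∃ N : SpecialLinearGroup (Fin 2) R, N.1 = !![a - y * k, b + x * k; c, d] :=
    ⟨⟨_, by rw [det_fin_two_of]; linear_combination (-k) * hxy⟩, rfl⟩
  refine ⟨N, Subtype.ext ?_⟩
  rw [map_apply_coe, hN]
  ext i j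
  fin_cases i <;> fin_cases j <;> simp [ha, hb, hc, hd, hk]

theorem map_map {T : Type*} [CommRing T] (f : R →+* S) (g : S →+* T)
    (x : SpecialLinearGroup n R) : map g (map f x) = map (g.comp f) x :=
  Subtype.ext <| by simp only [map_apply_coe, RingHom.mapMatrix_apply, Matrix.map_map]; rfl

theorem exists_map_factor_eq_of_isCoprime {I J : Ideal R} (hIJ : IsCoprime I J)
    (X : SpecialLinearGroup n (R ⧸ I)) (Y : SpecialLinearGroup n (R ⧸ J)) :
    ∃ g : SpecialLinearGroup n (R ⧸ I ⊓ J), map (Ideal.Quotient.factor inf_le_left) g = X ∧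
      map (Ideal.Quotient.factor inf_le_right) g = Y := by
  let e := Ideal.quotientInfEquivQuotientProd I J hIJ
  let M : Matrix n n (R ⧸ I ⊓ J) := fun i j => e.symm (X i j, Y i j)
  have hMI : (Ideal.Quotient.factor inf_le_left).mapMatrix M = X := by
    ext i j
    rw [RingHom.mapMatrix_apply, Matrix.map_apply,
      ← Ideal.quotientInfEquivQuotientProd_fst I J hIJ, e.apply_symm_apply]
  have hMJ : (Ideal.Quotient.factor inf_le_right).mapMatrix M = Y := by
    ext i j
    rw [RingHom.mapMatrix_apply, Matrix.map_apply,
      ← Ideal.quotientInfEquivQuotientProd_snd I J hIJ, e.apply_symm_apply]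
  have hdet : M.det = 1 := e.injective <| Prod.ext
    (by rw [Ideal.quotientInfEquivQuotientProd_fst, RingHom.map_det, hMI, X.det_coe, map_one]; rfl)
    (by rw [Ideal.quotientInfEquivQuotientProd_snd, RingHom.map_det, hMJ, Y.det_coe, map_one]; rfl)
  obtain ⟨g, hg⟩ : ∃ g : SpecialLinearGroup n (R ⧸ I ⊓ J), g.1 = M := ⟨⟨M, hdet⟩, rfl⟩
  exact ⟨g, Subtype.ext (by rw [map_apply_coe, hg, hMI]),
    Subtype.ext (by rw [map_apply_coe, hg, hMJ])⟩

end Matrix.SpecialLinearGroup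

namespace IsDedekindDomain

open UniqueFactorizationMonoid

variable {A : Type*} [CommRing A] [IsDedekindDomain A]

theorem exists_isCoprime_le_of_mem_of_not_le (K : Ideal A) {c : A} (hc : c ≠ 0) :
    ∃ Q : Ideal A, IsCoprime K Q ∧ ∀ P : Ideal A, P.IsPrime → c ∈ P → ¬K ≤ P → Q ≤ P := by
  classical
  have hspan : Ideal.span {c} ≠ ⊥ := by simpa [Ideal.span_singleton_eq_bot] using hc
  let T := (normalizedFactors (Ideal.span {c})).toFinset.filter (¬K ≤ ·)
  have mem_T : ∀ P, P ∈ T ↔ (P.IsPrime ∧ Ideal.span {c} ≤ P) ∧ ¬K ≤ P := fun P => by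
    rw [Finset.mem_filter, Multiset.mem_toFinset, Ideal.mem_normalizedFactors_iff hspan]
  refine ⟨∏ P ∈ T, P, Ideal.isCoprime_iff_sup_eq.mpr (Ideal.sup_prod_eq_top fun P hP => ?_),
    fun P hP hcP hKP => ?_⟩
  · obtain ⟨⟨hP, hcP⟩, hKP⟩ := (mem_T P).mp hP
    have hPmax : P.IsMaximal := hP.isMaximal fun h => hspan (le_bot_iff.mp (h ▸ hcP))
    rw [sup_comm, ← codisjoint_iff]
    exact (Ideal.isMaximal_def.mp hPmax).not_le_iff_codisjoint.mp hKP
  · have hPT : P ∈ T := (mem_T P).mpr ⟨⟨hP, (Ideal.span_singleton_le_iff_mem P).mpr hcP⟩, hKP⟩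
    exact Ideal.prod_le_inf.trans (Finset.inf_le hPT)

theorem exists_isCoprime_mk_eq {K : Ideal A} (hK : K ≠ ⊥) {x y : A ⧸ K} (hxy : IsCoprime x y) :
    ∃ a b : A, IsCoprime a b ∧ Ideal.Quotient.mk K a = x ∧ Ideal.Quotient.mk K b = y := by
  -- a nonzero lift of `x`, so that only finitely many primes contain it
  obtain ⟨a, ha0, rfl⟩ : ∃ a : A, a ≠ 0 ∧ Ideal.Quotient.mk K a = x := by
    obtain ⟨a, rfl⟩ := Ideal.Quotient.mk_surjective x
    by_cases ha : a = 0
    · obtain ⟨z, hzK, hz0⟩ := Submodule.exists_mem_ne_zero_of_ne_bot hK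
      exact ⟨z, hz0, by rw [ha, Ideal.Quotient.eq_zero_iff_mem.mpr hzK, map_zero]⟩
    · exact ⟨a, ha, rfl⟩
  obtain ⟨b₀, rfl⟩ := Ideal.Quotient.mk_surjective y
  obtain ⟨Q, hKQ, hQ⟩ := exists_isCoprime_le_of_mem_of_not_le K ha0
  obtain ⟨u, hu, v, hv, huv⟩ := hKQ.exists
  -- `b ≡ b₀ mod K` and `b ≡ 1` modulo every prime containing `a` but not `K`
  set b := b₀ * v + u
  have hb : Ideal.Quotient.mk K b = Ideal.Quotient.mk K b₀ := by
    rw [Ideal.Quotient.eq, show b - b₀ = (1 - b₀) * u by linear_combination b₀ * huv]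
    exact K.mul_mem_left _ hu
  refine ⟨a, b, ?_, rfl, hb⟩
  refine (Ideal.isCoprime_span_singleton_iff a b).mp
    (Ideal.coprime_of_no_prime_ge fun P haP hbP hP => ?_)
  rw [Ideal.span_singleton_le_iff_mem] at haP hbP
  by_cases hKP : K ≤ P
  · have := (hb ▸ hxy).map (Ideal.Quotient.factor hKP)
    simp only [Ideal.Quotient.factor_mk, Ideal.Quotient.eq_zero_iff_mem.mpr haP,
      Ideal.Quotient.eq_zero_iff_mem.mpr hbP, isCoprime_zero_left] at this
    exact not_isUnit_zero this
  · have h1 : (1 : A) = b - (b₀ - 1) * v := by linear_combination -huv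
    exact hP.ne_top ((Ideal.eq_top_iff_one P).mpr
      (h1 ▸ P.sub_mem hbP (P.mul_mem_left _ (hQ P hP haP hKP hv))))

theorem specialLinearGroup_map_mk_surjective {K : Ideal A} (hK : K ≠ ⊥) :
    Function.Surjective (SpecialLinearGroup.map (n := Fin 2) (Ideal.Quotient.mk K)) :=
  SpecialLinearGroup.map_surjective_of_isCoprime_lift Ideal.Quotient.mk_surjective
    fun _ _ hxy => exists_isCoprime_mk_eq hK hxy

end IsDedekindDomain

theorem stmt6_general (A : Type*) [CommRing A] [IsDedekindDomain A]
    (I J : Ideal A) (hI : I ≠ ⊥) (hJ : J ≠ ⊥) (hIJ : I ⊔ J = ⊤) :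
    Function.Surjective
      ((Matrix.SpecialLinearGroup.map (n := Fin 2) (Ideal.Quotient.mk J)).comp
        (Gamma A I).subtype) := by
  intro T
  have hK : I ⊓ J ≠ ⊥ := by
    rw [← Ideal.mul_eq_inf_of_coprime hIJ, Ne, Ideal.mul_eq_bot, not_or]
    exact ⟨hI, hJ⟩
  obtain ⟨S, hSI, hSJ⟩ :=
    SpecialLinearGroup.exists_map_factor_eq_of_isCoprime (Ideal.isCoprime_iff_sup_eq.mpr hIJ) 1 T
  obtain ⟨N, rfl⟩ := IsDedekindDomain.specialLinearGroup_map_mk_surjective hK S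
  rw [SpecialLinearGroup.map_map, Ideal.Quotient.factor_comp_mk] at hSI hSJ
  exact ⟨⟨N, hSI⟩, hSJ⟩

/-- if `I` and `J` are nonzero comaximal ideals of a Dedekind domain `A`, then the
composite `Γ(I) → SL₂(A) → SL₂(A/J)` is surjective. -/
theorem stmt6 (A : Type*) [CommRing A] [IsDomain A] [IsDedekindDomain A]
    (I J : Ideal A) (hI : I ≠ ⊥) (hJ : J ≠ ⊥) (hIJ : I ⊔ J = ⊤) :
    Function.Surjective
      ((Matrix.SpecialLinearGroup.map (n := Fin 2) (Ideal.Quotient.mk J)).comp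
        (Gamma A I).subtype) :=
  stmt6_general A I J hI hJ hIJ
end
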